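/- arXiv:2109.10870 — 4 statements merged into one kernel-verified Lean document; each statement's English description precedes it below -/
import Mathlib

section
/- (First theorem on passing ε-δ in a chain.) Let κ₁ be a Markov kernel from M to Ω₁, κ₂ a Markov kernel from Ω₁ to Ω₂, P ∈ M, X₁ ⊆ Ω₁ and X₂ ⊆ Ω₂ measurable, and m a measure on M. Suppose P is (ε₁, δ₁)-accountable for X₁ under κ₁ (so κ₁(P)(X₁) > ε₁ ≥ 0), suppose ε₂ > 0 and κ₂(x)(X₂) ≥ ε₂ for every x ∈ X₁, and suppose δ > m(A'_{ε₁ε₂}), where A'_ε = {a ∈ M : a ≠ P and (κ₂ ∘ κ₁)(a)(X₂) > ε}. Then (κ₂ ∘ κ₁)(P)(X₂) > ε₁ · ε₂, and P is (ε₁ε₂, δ)-accountable for X₂ under the composite kernel κ₂ ∘ κ₁. -/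
open MeasureTheory ProbabilityTheory
open scoped ENNReal

namespace ProbabilityTheory.Kernel

variable {α β γ : Type*} [MeasurableSpace α] [MeasurableSpace β] [MeasurableSpace γ]

lemma apply_mul_le_comp_apply (κ : Kernel α β) (η : Kernel β γ) (a : α) {s : Set β}
    {t : Set γ} (ht : MeasurableSet t) {c : ℝ≥0∞} (hc : ∀ x ∈ s, c ≤ η x t) :
    κ a s * c ≤ (η ∘ₖ κ) a t :=
  calc κ a s * c = ∫⁻ _ in s, c ∂(κ a) := by rw [MeasureTheory.setLIntegral_const, mul_comm]
    _ ≤ ∫⁻ x in s, η x t ∂(κ a) := setLIntegral_mono (η.measurable_coe ht) hc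
    _ ≤ ∫⁻ x, η x t ∂(κ a) := setLIntegral_le_lintegral _ _
    _ = (η ∘ₖ κ) a t := (comp_apply' _ _ _ ht).symm

lemma mul_lt_comp_apply (κ : Kernel α β) (η : Kernel β γ) [IsFiniteKernel η] {a : α}
    {s : Set β} {t : Set γ} (ht : MeasurableSet t) {ε c : ℝ≥0∞} (hε : ε < κ a s)
    (hc_pos : 0 < c) (hc : ∀ x ∈ s, c ≤ η x t) :
    ε * c < (η ∘ₖ κ) a t := by
  obtain ⟨x, hx⟩ : s.Nonempty := nonempty_of_measure_ne_zero hε.ne_bot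
  have hc_ne_top : c ≠ ⊤ := ne_top_of_le_ne_top (measure_ne_top (η x) t) (hc x hx)
  calc ε * c < κ a s * c := ENNReal.mul_lt_mul_left hc_pos.ne' hc_ne_top hε
    _ ≤ (η ∘ₖ κ) a t := apply_mul_le_comp_apply κ η a ht hc

end ProbabilityTheory.Kernel

theorem chain_accountability_first_general {M Ω₁ Ω₂ : Type*}
    [MeasurableSpace M] [MeasurableSpace Ω₁] [MeasurableSpace Ω₂]
    (κ₁ : Kernel M Ω₁) (κ₂ : Kernel Ω₁ Ω₂) [IsMarkovKernel κ₂]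
    (P : M) (X₁ : Set Ω₁) (X₂ : Set Ω₂) (hX₂ : MeasurableSet X₂)
    (m : Measure M) (ε₁ δ₁ ε₂ δ : ℝ≥0∞)
    (hacc₁ : ε₁ < κ₁ P X₁ ∧ m {a : M | a ≠ P ∧ ε₁ < κ₁ a X₁} < δ₁)
    (hε₂ : 0 < ε₂) (h₂ : ∀ x ∈ X₁, ε₂ ≤ κ₂ x X₂)
    (hδ : m {a : M | a ≠ P ∧ ε₁ * ε₂ < (κ₂ ∘ₖ κ₁) a X₂} < δ) :
    ε₁ * ε₂ < (κ₂ ∘ₖ κ₁) P X₂ ∧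
      (ε₁ * ε₂ < (κ₂ ∘ₖ κ₁) P X₂ ∧
        m {a : M | a ≠ P ∧ ε₁ * ε₂ < (κ₂ ∘ₖ κ₁) a X₂} < δ) := by
  have hcomp : ε₁ * ε₂ < (κ₂ ∘ₖ κ₁) P X₂ := κ₁.mul_lt_comp_apply κ₂ hX₂ hacc₁.1 hε₂ h₂
  exact ⟨hcomp, hcomp, hδ⟩

/-- First theorem on passing ε-δ in a chain: if `P` is `(ε₁, δ₁)`-accountable
for `X₁` under `κ₁`, `ε₂ > 0` with `κ₂ x X₂ ≥ ε₂` on `X₁`, and `δ > m A'_{ε₁ε₂}` (rival set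
for the composite kernel), then `(κ₂ ∘ₖ κ₁) P X₂ > ε₁ * ε₂` and `P` is `(ε₁ε₂, δ)`-accountable
for `X₂` under `κ₂ ∘ₖ κ₁`. -/
theorem chain_accountability_first {M Ω₁ Ω₂ : Type*}
    [MeasurableSpace M] [MeasurableSpace Ω₁] [MeasurableSpace Ω₂]
    (κ₁ : Kernel M Ω₁) [IsMarkovKernel κ₁] (κ₂ : Kernel Ω₁ Ω₂) [IsMarkovKernel κ₂]
    (P : M) (X₁ : Set Ω₁) (X₂ : Set Ω₂) (hX₁ : MeasurableSet X₁) (hX₂ : MeasurableSet X₂)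
    (m : Measure M) (ε₁ δ₁ ε₂ δ : ℝ≥0∞)
    (hacc₁ : ε₁ < κ₁ P X₁ ∧ m {a : M | a ≠ P ∧ ε₁ < κ₁ a X₁} < δ₁)
    (hε₂ : 0 < ε₂) (h₂ : ∀ x ∈ X₁, ε₂ ≤ κ₂ x X₂)
    (hδ : m {a : M | a ≠ P ∧ ε₁ * ε₂ < (κ₂ ∘ₖ κ₁) a X₂} < δ) :
    ε₁ * ε₂ < (κ₂ ∘ₖ κ₁) P X₂ ∧
      (ε₁ * ε₂ < (κ₂ ∘ₖ κ₁) P X₂ ∧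
        m {a : M | a ≠ P ∧ ε₁ * ε₂ < (κ₂ ∘ₖ κ₁) a X₂} < δ) :=
  chain_accountability_first_general κ₁ κ₂ P X₁ X₂ hX₂ m ε₁ δ₁ ε₂ δ hacc₁ hε₂ h₂ hδ
end

section
/- (Deducing ε-δ from a chain.) Let κ₁ be a Markov kernel from M to Ω₁, κ₂ a Markov kernel from Ω₁ to Ω₂, P ∈ M, X₂ ⊆ Ω₂ measurable, and m a measure on M. Let X_1, …, X_n be a finite measurable partition of Ω₁ and let X_a satisfy κ₁(P)(X_a) ≥ κ₁(P)(X_i) for all i. Suppose P is (ε₀, δ₀)-accountable for X₂ under the composite kernel κ₂ ∘ κ₁ (so (κ₂ ∘ κ₁)(P)(X₂) > ε₀). Then κ₁(P)(X_a) > ε₀/n, and for any δ > m({a ∈ M : a ≠ P and κ₁(a)(X_a) > ε₀/n}), P is (ε₀/n, δ)-accountable for X_a under κ₁. -/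
open MeasureTheory ProbabilityTheory
open scoped ENNReal

/-- Deducing ε-δ from a chain: if `P` is `(ε₀, δ₀)`-accountable for `X₂` under
`κ₂ ∘ₖ κ₁`, and `X a` is a maximal-mass element of a finite measurable partition of `Ω₁`, then
`κ₁ P (X a) > ε₀ / n`, and for any `δ > m {a' | a' ≠ P ∧ κ₁ a' (X a) > ε₀ / n}`, `P` is
`(ε₀/n, δ)`-accountable for `X a` under `κ₁`. -/
theorem chain_accountability_deduce {M Ω₁ Ω₂ : Type*}
    [MeasurableSpace M] [MeasurableSpace Ω₁] [MeasurableSpace Ω₂]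
    (κ₁ : Kernel M Ω₁) [IsMarkovKernel κ₁] (κ₂ : Kernel Ω₁ Ω₂) [IsMarkovKernel κ₂]
    (P : M) (X₂ : Set Ω₂) (hX₂ : MeasurableSet X₂) (m : Measure M)
    (n : ℕ) (X : Fin n → Set Ω₁) (hXmeas : ∀ i, MeasurableSet (X i))
    (hXdisj : Pairwise (Function.onFun Disjoint X)) (hXcover : ⋃ i, X i = Set.univ)
    (a : Fin n) (ha : ∀ i, κ₁ P (X i) ≤ κ₁ P (X a))
    (ε₀ δ₀ : ℝ≥0∞)
    (hacc : ε₀ < (κ₂ ∘ₖ κ₁) P X₂ ∧ m {b : M | b ≠ P ∧ ε₀ < (κ₂ ∘ₖ κ₁) b X₂} < δ₀) :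
    ε₀ / n < κ₁ P (X a) ∧
      ∀ δ : ℝ≥0∞, m {b : M | b ≠ P ∧ ε₀ / n < κ₁ b (X a)} < δ →
        ε₀ / n < κ₁ P (X a) ∧ m {b : M | b ≠ P ∧ ε₀ / n < κ₁ b (X a)} < δ := by
  have key : ε₀ / n < κ₁ P (X a) := by
    have h1 : (κ₂ ∘ₖ κ₁) P X₂ ≤ κ₁ P Set.univ := by
      rw [Kernel.comp_apply' _ _ _ hX₂]
      calc ∫⁻ x, κ₂ x X₂ ∂(κ₁ P) ≤ ∫⁻ _, 1 ∂(κ₁ P) :=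
            lintegral_mono fun x => prob_le_one
        _ = κ₁ P Set.univ := by simp
    have h2 : κ₁ P Set.univ = ∑ i, κ₁ P (X i) := by
      rw [← hXcover, measure_iUnion hXdisj hXmeas, tsum_fintype]
    have h3 : ∑ i, κ₁ P (X i) ≤ n * κ₁ P (X a) := by
      calc ∑ i, κ₁ P (X i) ≤ ∑ _i : Fin n, κ₁ P (X a) :=
            Finset.sum_le_sum fun i _ => ha i
        _ = n * κ₁ P (X a) := by simp [Finset.sum_const, mul_comm]
    have hlt : ε₀ < n * κ₁ P (X a) :=
      lt_of_lt_of_le hacc.1 (h1.trans (h2.le.trans h3))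
    have hn : n ≠ 0 := by
      rintro rfl
      simp at h2
    rw [ENNReal.div_lt_iff (Or.inl (by exact_mod_cast hn)) (Or.inl (ENNReal.natCast_ne_top n))]
    rwa [mul_comm]
  exact ⟨key, fun δ hδ => ⟨key, hδ⟩⟩
end

section
/- (Core inequality of the second chaining theorem.) Let κ₁ be a Markov kernel from M to Ω₁ and κ₂ a Markov kernel from Ω₁ to Ω₂. Let P ∈ M, let X₂ ⊆ Ω₂ be measurable, let X_1, …, X_n be a finite measurable partition of Ω₁ with κ₁(P)(X_i) > 0 for all i, and let X_a be an element of the partition with minimal mass, i.e. κ₁(P)(X_a) ≤ κ₁(P)(X_i) for all i. Suppose α ≥ 0 and for every i the conditional probability ℙ(F₂∘F₁(P) ∈ X₂ | F₁(P) ∈ X_i) = (∫_{X_i} κ₂(x)(X₂) d(κ₁(P))(x)) / κ₁(P)(X_i) is > α. Then (κ₂ ∘ κ₁)(P)(X₂) ≥ n · α · κ₁(P)(X_a). -/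
open MeasureTheory ProbabilityTheory
open scoped ENNReal

/-- Core inequality of the second chaining theorem: for a finite measurable
partition of `Ω₁` whose pieces all have positive `κ₁ P`-mass, with `X a` of minimal mass, if
every conditional probability `(∫⁻_{X i} κ₂ x X₂ ∂(κ₁ P)) / κ₁ P (X i)` exceeds `α`, then
`(κ₂ ∘ₖ κ₁) P X₂ ≥ n * α * κ₁ P (X a)`. -/
theorem comp_kernel_ge_card_mul_min {M Ω₁ Ω₂ : Type*}
    [MeasurableSpace M] [MeasurableSpace Ω₁] [MeasurableSpace Ω₂]
    (κ₁ : Kernel M Ω₁) [IsMarkovKernel κ₁] (κ₂ : Kernel Ω₁ Ω₂) [IsMarkovKernel κ₂]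
    (P : M) (X₂ : Set Ω₂) (hX₂ : MeasurableSet X₂)
    (n : ℕ) (X : Fin n → Set Ω₁) (hXmeas : ∀ i, MeasurableSet (X i))
    (hXdisj : Pairwise (Function.onFun Disjoint X)) (hXcover : ⋃ i, X i = Set.univ)
    (hXpos : ∀ i, 0 < κ₁ P (X i))
    (a : Fin n) (ha : ∀ i, κ₁ P (X a) ≤ κ₁ P (X i))
    (α : ℝ≥0∞)
    (hα : ∀ i, α < (∫⁻ x in X i, κ₂ x X₂ ∂(κ₁ P)) / κ₁ P (X i)) :
    n * α * κ₁ P (X a) ≤ (κ₂ ∘ₖ κ₁) P X₂ := by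
  have hcomp : (κ₂ ∘ₖ κ₁) P X₂ = ∫⁻ x, κ₂ x X₂ ∂(κ₁ P) :=
    ProbabilityTheory.Kernel.comp_apply' κ₂ κ₁ P hX₂
  have hsplit : ∫⁻ x, κ₂ x X₂ ∂(κ₁ P) = ∑ i, ∫⁻ x in X i, κ₂ x X₂ ∂(κ₁ P) := by
    rw [← setLIntegral_univ, ← hXcover,
      lintegral_iUnion hXmeas hXdisj, tsum_fintype]
  have hterm : ∀ i, α * κ₁ P (X a) ≤ ∫⁻ x in X i, κ₂ x X₂ ∂(κ₁ P) := by
    intro i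
    have hfin : κ₁ P (X i) ≠ ∞ := (measure_lt_top _ _).ne
    have h1 : α * κ₁ P (X i) ≤ ∫⁻ x in X i, κ₂ x X₂ ∂(κ₁ P) :=
      (ENNReal.mul_le_of_le_div (hα i).le)
    exact le_trans (mul_le_mul_right (ha i) α) h1
  calc (n : ℝ≥0∞) * α * κ₁ P (X a) = ∑ _i : Fin n, α * κ₁ P (X a) := by
        simp [Finset.sum_const, mul_assoc]
    _ ≤ ∑ i, ∫⁻ x in X i, κ₂ x X₂ ∂(κ₁ P) := Finset.sum_le_sum fun i _ => hterm i
    _ = (κ₂ ∘ₖ κ₁) P X₂ := by rw [hcomp, hsplit]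
end

section
/- (Second theorem on passing ε-δ in a chain.) Let κ₁ be a Markov kernel from M to Ω₁, κ₂ a Markov kernel from Ω₁ to Ω₂, P ∈ M, X₂ ⊆ Ω₂ measurable, and m a measure on M. Let X_1, …, X_n be a finite measurable partition of Ω₁ with κ₁(P)(X_i) > 0 for all i, and let X_a satisfy κ₁(P)(X_a) ≤ κ₁(P)(X_i) for all i. Suppose α > 0 and for every i the conditional probability ℙ(F₂∘F₁(P) ∈ X₂ | F₁(P) ∈ X_i) = (∫_{X_i} κ₂(x)(X₂) d(κ₁(P))(x)) / κ₁(P)(X_i) is > α. Suppose further that P is (ε₀, δ₀)-accountable for X_a under κ₁ (so κ₁(P)(X_a) > ε₀ ≥ 0). Then (κ₂ ∘ κ₁)(P)(X₂) > n · ε₀ · α, and for any δ > m({a ∈ M : a ≠ P and (κ₂ ∘ κ₁)(a)(X₂) > n·ε₀·α}), P is (n·ε₀·α, δ)-accountable for X₂ under κ₂ ∘ κ₁. -/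
open MeasureTheory ProbabilityTheory
open scoped ENNReal

/-!
Split `Ω₁` along the partition: `(κ₂ ∘ₖ κ₁) P X₂` is the sum over `i` of the masses
`∫⁻ x in X i, κ₂ x X₂ ∂(κ₁ P)`. By the bound on the conditional probabilities each of them exceeds
`α · κ₁ P (X i) ≥ α · κ₁ P (X a) > α · ε₀`, by minimality of `X a` and accountability of `P`.
Summing these `n` strict inequalities gives `(κ₂ ∘ₖ κ₁) P X₂ > n · ε₀ · α`.
-/

theorem ProbabilityTheory.Kernel.comp_apply_eq_tsum_setLIntegral {α β γ ι : Type*}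
    [MeasurableSpace α] [MeasurableSpace β] [MeasurableSpace γ] [Countable ι]
    (η : Kernel β γ) (κ : Kernel α β) (a : α) {s : Set γ} (hs : MeasurableSet s)
    {X : ι → Set β} (hXmeas : ∀ i, MeasurableSet (X i))
    (hXdisj : Pairwise (Function.onFun Disjoint X)) (hXcover : ⋃ i, X i = Set.univ) :
    (η ∘ₖ κ) a s = ∑' i, ∫⁻ x in X i, η x s ∂(κ a) := by
  rw [Kernel.comp_apply' _ _ _ hs, ← setLIntegral_univ, ← hXcover,
    lintegral_iUnion hXmeas hXdisj]

theorem ENNReal.mul_lt_of_lt_of_lt_div {ε μ α I : ℝ≥0∞} (hε : ε < μ) (hα₀ : α ≠ 0)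
    (hα : α < I / μ) : ε * α < I :=
  calc ε * α < μ * α := ENNReal.mul_lt_mul_left hα₀ (hα.trans_le le_top).ne hε
    _ < I := ENNReal.mul_lt_of_lt_div' hα

theorem chain_accountability_second_general {M Ω₁ Ω₂ : Type*}
    [MeasurableSpace M] [MeasurableSpace Ω₁] [MeasurableSpace Ω₂]
    (κ₁ : Kernel M Ω₁) (κ₂ : Kernel Ω₁ Ω₂)
    (P : M) (X₂ : Set Ω₂) (hX₂ : MeasurableSet X₂) (m : Measure M)
    (n : ℕ) (X : Fin n → Set Ω₁) (hXmeas : ∀ i, MeasurableSet (X i))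
    (hXdisj : Pairwise (Function.onFun Disjoint X)) (hXcover : ⋃ i, X i = Set.univ)
    (a : Fin n) (ha : ∀ i, κ₁ P (X a) ≤ κ₁ P (X i))
    (α : ℝ≥0∞) (hαpos : 0 < α)
    (hα : ∀ i, α < (∫⁻ x in X i, κ₂ x X₂ ∂(κ₁ P)) / κ₁ P (X i))
    (ε₀ δ₀ : ℝ≥0∞)
    (hacc : ε₀ < κ₁ P (X a) ∧ m {b : M | b ≠ P ∧ ε₀ < κ₁ b (X a)} < δ₀) :
    n * ε₀ * α < (κ₂ ∘ₖ κ₁) P X₂ ∧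
      ∀ δ : ℝ≥0∞, m {b : M | b ≠ P ∧ n * ε₀ * α < (κ₂ ∘ₖ κ₁) b X₂} < δ →
        n * ε₀ * α < (κ₂ ∘ₖ κ₁) P X₂ ∧
          m {b : M | b ≠ P ∧ n * ε₀ * α < (κ₂ ∘ₖ κ₁) b X₂} < δ := by
  have hblock : ∀ i, ε₀ * α < ∫⁻ x in X i, κ₂ x X₂ ∂(κ₁ P) := fun i =>
    ENNReal.mul_lt_of_lt_of_lt_div (hacc.1.trans_le (ha i)) hαpos.ne' (hα i)
  have hmass : n * ε₀ * α < (κ₂ ∘ₖ κ₁) P X₂ := by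
    rw [Kernel.comp_apply_eq_tsum_setLIntegral κ₂ κ₁ P hX₂ hXmeas hXdisj hXcover, tsum_fintype]
    calc (n : ℝ≥0∞) * ε₀ * α = ∑ _i : Fin n, ε₀ * α := by simp [mul_assoc]
      _ < ∑ i, ∫⁻ x in X i, κ₂ x X₂ ∂(κ₁ P) :=
        ENNReal.sum_lt_sum_of_nonempty ⟨a, Finset.mem_univ a⟩ fun i _ => hblock i
  exact ⟨hmass, fun _ hδ => ⟨hmass, hδ⟩⟩

/-- Second theorem on passing ε-δ in a chain: with a finite measurable partition
of `Ω₁` of everywhere positive `κ₁ P`-mass, `X a` of minimal mass, conditional probabilities all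
`> α > 0`, and `P` `(ε₀, δ₀)`-accountable for `X a` under `κ₁`, we get
`(κ₂ ∘ₖ κ₁) P X₂ > n * ε₀ * α`, and for any `δ` exceeding the mass of the rival set at level
`n * ε₀ * α`, `P` is `(n·ε₀·α, δ)`-accountable for `X₂` under `κ₂ ∘ₖ κ₁`. -/
theorem chain_accountability_second {M Ω₁ Ω₂ : Type*}
    [MeasurableSpace M] [MeasurableSpace Ω₁] [MeasurableSpace Ω₂]
    (κ₁ : Kernel M Ω₁) [IsMarkovKernel κ₁] (κ₂ : Kernel Ω₁ Ω₂) [IsMarkovKernel κ₂]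
    (P : M) (X₂ : Set Ω₂) (hX₂ : MeasurableSet X₂) (m : Measure M)
    (n : ℕ) (X : Fin n → Set Ω₁) (hXmeas : ∀ i, MeasurableSet (X i))
    (hXdisj : Pairwise (Function.onFun Disjoint X)) (hXcover : ⋃ i, X i = Set.univ)
    (hXpos : ∀ i, 0 < κ₁ P (X i))
    (a : Fin n) (ha : ∀ i, κ₁ P (X a) ≤ κ₁ P (X i))
    (α : ℝ≥0∞) (hαpos : 0 < α)
    (hα : ∀ i, α < (∫⁻ x in X i, κ₂ x X₂ ∂(κ₁ P)) / κ₁ P (X i))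
    (ε₀ δ₀ : ℝ≥0∞)
    (hacc : ε₀ < κ₁ P (X a) ∧ m {b : M | b ≠ P ∧ ε₀ < κ₁ b (X a)} < δ₀) :
    n * ε₀ * α < (κ₂ ∘ₖ κ₁) P X₂ ∧
      ∀ δ : ℝ≥0∞, m {b : M | b ≠ P ∧ n * ε₀ * α < (κ₂ ∘ₖ κ₁) b X₂} < δ →
        n * ε₀ * α < (κ₂ ∘ₖ κ₁) P X₂ ∧
          m {b : M | b ≠ P ∧ n * ε₀ * α < (κ₂ ∘ₖ κ₁) b X₂} < δ :=
  chain_accountability_second_general κ₁ κ₂ P X₂ hX₂ m n X hXmeas hXdisj hXcover a ha α hαpos hα ε₀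
    δ₀ hacc
end
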